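/- arXiv:1805.00197 — 7 statements merged into one kernel-verified Lean document; each statement's English description precedes it below -/
import Mathlib

section
/- There exists a unique positive real number ζ₀ such that ζ₀² + 1 = exp(ζ₀²/2); moreover ζ₀ > 1 and z² + 1 > exp(z²/2) for all z ∈ (0, ζ₀). -/
/-! With `t = z ^ 2` the equation reads `φ t = 0` for `φ t = log (t + 1) - t / 2`. This `φ` is
strictly concave with `φ 0 = 0`, so `φ t / t` is strictly decreasing on `t > 0`: `φ` has at most
one positive zero, and is positive to the left of it. As `φ 1 = log 2 - 1 / 2 > 0` and
`φ 4 = log 5 - 2 < 0`, such a zero `t₀ ∈ (1, 4)` exists, and `ζ₀ = √t₀`. -/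

open Real Set

section StrictConcave

variable {𝕜 : Type*} [Field 𝕜] [LinearOrder 𝕜] [IsStrictOrderedRing 𝕜] {f : 𝕜 → 𝕜}

theorem StrictConcaveOn.div_strictAntiOn_Ioi (hf : StrictConcaveOn 𝕜 (Ici 0) f) (h0 : f 0 = 0) :
    StrictAntiOn (fun x => f x / x) (Ioi 0) := by
  intro x hx y hy hxy
  simpa [h0] using hf.secant_strict_mono self_mem_Ici (mem_Ici_of_Ioi hx) (mem_Ici_of_Ioi hy)
    hx.ne' hy.ne' hxy

theorem StrictConcaveOn.pos_of_lt_of_eq_zero (hf : StrictConcaveOn 𝕜 (Ici 0) f) (h0 : f 0 = 0)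
    {s t : 𝕜} (hs : 0 < s) (hst : s < t) (ht : f t = 0) : 0 < f s := by
  have := hf.div_strictAntiOn_Ioi h0 hs (hs.trans hst) hst
  simp only [ht, zero_div] at this
  exact (div_pos_iff_of_pos_right hs).mp this

theorem StrictConcaveOn.eq_of_eq_zero (hf : StrictConcaveOn 𝕜 (Ici 0) f) (h0 : f 0 = 0)
    {s t : 𝕜} (hs : 0 < s) (ht : 0 < t) (hs0 : f s = 0) (ht0 : f t = 0) : s = t :=
  (hf.div_strictAntiOn_Ioi h0).injOn hs ht (by simp only [hs0, ht0, zero_div])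

end StrictConcave

noncomputable def logGap (t : ℝ) : ℝ := log (t + 1) - t / 2

theorem logGap_zero : logGap 0 = 0 := by
  simp [logGap]

theorem strictConcaveOn_logGap : StrictConcaveOn ℝ (Ici 0) logGap := by
  have hlog : StrictConcaveOn ℝ (Ici 0) fun t : ℝ => log (t + 1) :=
    (strictConcaveOn_log_Ioi.translate_left 1).subset (fun t (ht : 0 ≤ t) => by
      simp only [mem_preimage, mem_Ioi]; linarith) (convex_Ici 0)
  exact hlog.sub_convexOn
    ⟨convex_Ici 0, fun x _ y _ a b _ _ _ => by simp only [smul_eq_mul]; linarith⟩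

theorem logGap_pos_iff {t : ℝ} (ht : 0 ≤ t) : 0 < logGap t ↔ exp (t / 2) < t + 1 := by
  rw [logGap, sub_pos, lt_log_iff_exp_lt (by linarith)]

theorem logGap_eq_zero_iff {t : ℝ} (ht : 0 ≤ t) : logGap t = 0 ↔ t + 1 = exp (t / 2) := by
  rw [logGap, sub_eq_zero, eq_comm, ← exp_eq_exp, exp_log (by linarith), eq_comm]

theorem logGap_one_pos : 0 < logGap 1 := by
  have := log_two_gt_d9
  norm_num [logGap]
  linarith

theorem logGap_four_neg : logGap 4 < 0 := by
  have h : (5 : ℝ) < exp 2 := by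
    rw [show (2 : ℝ) = 1 + 1 by norm_num, exp_add]
    nlinarith [exp_one_gt_d9]
  rw [logGap, sub_neg, show (4 : ℝ) + 1 = 5 by norm_num, log_lt_iff_lt_exp (by norm_num)]
  norm_num [h]

theorem exists_logGap_eq_zero : ∃ t ∈ Ioo (1 : ℝ) 4, logGap t = 0 := by
  have hcont : ContinuousOn logGap (Icc 1 4) := by
    unfold logGap
    fun_prop (disch := intro t ht; linarith [ht.1])
  exact intermediate_value_Ioo' (by norm_num) hcont ⟨logGap_four_neg, logGap_one_pos⟩

theorem stmt_0 :
    ∃ ζ : ℝ, 0 < ζ ∧ ζ ^ 2 + 1 = Real.exp (ζ ^ 2 / 2) ∧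
      (∀ z : ℝ, 0 < z → z ^ 2 + 1 = Real.exp (z ^ 2 / 2) → z = ζ) ∧
      1 < ζ ∧
      (∀ z ∈ Set.Ioo (0 : ℝ) ζ, z ^ 2 + 1 > Real.exp (z ^ 2 / 2)) := by
  obtain ⟨t, ⟨ht1, -⟩, ht⟩ := exists_logGap_eq_zero
  have ht0 : 0 < t := one_pos.trans ht1
  refine ⟨√t, sqrt_pos.mpr ht0, ?_, fun z hz hzt => ?_, ?_, fun z hz => ?_⟩
  · rw [sq_sqrt ht0.le, ← logGap_eq_zero_iff ht0.le]
    exact ht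
  · have hz0 : logGap (z ^ 2) = 0 := (logGap_eq_zero_iff (sq_nonneg z)).mpr hzt
    rw [← sqrt_sq hz.le,
      strictConcaveOn_logGap.eq_of_eq_zero logGap_zero (by positivity) ht0 hz0 ht]
  · rwa [lt_sqrt zero_le_one, one_pow]
  · have hzt : z ^ 2 < t := (lt_sqrt hz.1.le).mp hz.2
    refine (logGap_pos_iff (sq_nonneg z)).mp ?_
    exact strictConcaveOn_logGap.pos_of_lt_of_eq_zero logGap_zero (pow_pos hz.1 2) hzt ht
end

section
/- For σ > 0, the equation z^σ·(σ(z−1)² + 1) = exp(σ(z²−1)/2) has exactly two roots on [1,∞), namely z = 1 and a second root ζ_σ satisfying ζ_σ > √((1+σ)/σ) > 1; furthermore z^σ·(σ(z−1)² + 1) > exp(σ(z²−1)/2) for all z ∈ (1, ζ_σ). -/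
/-!
Taking logarithms, the equation reads `g z = 0` for `g = logDefect σ`. Then `g 1 = 0` and
`g' z = σ (z - 1)² (1 - σ (z² - 1)) / (z (σ (z - 1)² + 1))`, so `g` increases strictly on
`[1, w]` and decreases strictly on `[w, ∞)`, where `w = √((1 + σ) / σ)`. Since `log z ≤ z - 1`,
`g z ≤ log (1 + u) - u / 2` with `u = σ (z - 1)²`, which is `≤ 0` at `u = 8`. Hence `g > 0` on
`(1, w]`, and on `[w, ∞)` it has exactly one zero, which is the second root `ζ`.
-/

open Real Set

theorem exists_zero_of_strictMonoOn_of_strictAntiOn {f : ℝ → ℝ} {a w b : ℝ}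
    (hmono : StrictMonoOn f (Icc a w)) (hanti : StrictAntiOn f (Ici w))
    (hcont : ContinuousOn f (Icc w b)) (haw : a < w) (hwb : w ≤ b)
    (hfa : f a = 0) (hfb : f b ≤ 0) :
    ∃ ζ, w < ζ ∧ f ζ = 0 ∧ (∀ z, a ≤ z → f z = 0 → z = a ∨ z = ζ) ∧
      ∀ z ∈ Ioo a ζ, 0 < f z := by
  have hpos : ∀ z ∈ Ioc a w, 0 < f z := fun z hz =>
    hfa ▸ hmono ⟨le_rfl, haw.le⟩ ⟨hz.1.le, hz.2⟩ hz.1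
  have hfw : 0 < f w := hpos w ⟨haw, le_rfl⟩
  obtain ⟨ζ, hζ, hfζ⟩ := intermediate_value_Icc' hwb hcont ⟨hfb, hfw.le⟩
  have hwζ : w < ζ := hζ.1.lt_of_ne (by rintro rfl; exact hfw.ne' hfζ)
  refine ⟨ζ, hwζ, hfζ, fun z haz hfz => ?_, fun z hz => ?_⟩
  · rcases haz.eq_or_lt with rfl | haz
    · exact Or.inl rfl
    rcases le_or_gt z w with hzw | hwz
    · exact absurd hfz (hpos z ⟨haz, hzw⟩).ne'
    · exact Or.inr (hanti.injOn hwz.le hwζ.le (hfz.trans hfζ.symm))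
  · rcases le_or_gt z w with hzw | hwz
    · exact hpos z ⟨hz.1, hzw⟩
    · exact hfζ ▸ hanti hwz.le hwζ.le hz.2

noncomputable def logDefect (σ z : ℝ) : ℝ :=
  σ * log z + log (σ * (z - 1) ^ 2 + 1) - σ * (z ^ 2 - 1) / 2

section logDefect

variable {σ z : ℝ}

theorem logDefect_one : logDefect σ 1 = 0 := by simp [logDefect]

theorem exp_logDefect (hσ : 0 ≤ σ) (hz : 0 < z) :
    exp (logDefect σ z + σ * (z ^ 2 - 1) / 2) = z ^ σ * (σ * (z - 1) ^ 2 + 1) := by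
  rw [logDefect, sub_add_cancel, exp_add, exp_log (by positivity), rpow_def_of_pos hz, mul_comm σ]

theorem hasDerivAt_logDefect (hσ : 0 ≤ σ) (hz : 0 < z) :
    HasDerivAt (logDefect σ)
      (σ * (z - 1) ^ 2 * (1 - σ * (z ^ 2 - 1)) / (z * (σ * (z - 1) ^ 2 + 1))) z := by
  have hq : σ * (z - 1) ^ 2 + 1 ≠ 0 := by positivity
  have hlog : HasDerivAt (fun z => log (σ * (z - 1) ^ 2 + 1))
      (σ * (2 * (z - 1) ^ 1 * 1) / (σ * (z - 1) ^ 2 + 1)) z :=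
    ((((hasDerivAt_id z).sub_const 1).pow 2).const_mul σ |>.add_const 1).log hq
  refine ((((hasDerivAt_log hz.ne').const_mul σ).add hlog).sub
    ((((hasDerivAt_pow 2 z).sub_const 1).const_mul σ).div_const 2)).congr_deriv ?_
  field_simp
  ring

theorem logDefect_le (hσ : 0 ≤ σ) (hz : 0 < z) :
    logDefect σ z ≤ log (σ * (z - 1) ^ 2 + 1) - σ * (z - 1) ^ 2 / 2 := by
  have := mul_le_mul_of_nonneg_left (log_le_sub_one_of_pos hz) hσ
  rw [logDefect]
  linarith

theorem continuousOn_logDefect (hσ : 0 ≤ σ) : ContinuousOn (logDefect σ) (Ioi 0) :=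
  fun _ hz => (hasDerivAt_logDefect hσ hz).continuousAt.continuousWithinAt

theorem logDefect_eq_zero_iff (hσ : 0 ≤ σ) (hz : 0 < z) :
    z ^ σ * (σ * (z - 1) ^ 2 + 1) = exp (σ * (z ^ 2 - 1) / 2) ↔ logDefect σ z = 0 := by
  rw [← exp_logDefect hσ hz, exp_eq_exp, add_eq_right]

theorem logDefect_pos_iff (hσ : 0 ≤ σ) (hz : 0 < z) :
    exp (σ * (z ^ 2 - 1) / 2) < z ^ σ * (σ * (z - 1) ^ 2 + 1) ↔ 0 < logDefect σ z := by
  rw [← exp_logDefect hσ hz, exp_lt_exp, lt_add_iff_pos_left]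

theorem mul_sq_sub_one_lt_one_iff (hσ : 0 < σ) (hz : 0 ≤ z) :
    σ * (z ^ 2 - 1) < 1 ↔ z < √((1 + σ) / σ) := by
  rw [lt_sqrt hz, lt_div_iff₀ hσ]
  constructor <;> intro h <;> linarith

theorem one_lt_mul_sq_sub_one_iff (hσ : 0 < σ) (hz : 0 < z) :
    1 < σ * (z ^ 2 - 1) ↔ √((1 + σ) / σ) < z := by
  rw [sqrt_lt' hz, div_lt_iff₀ hσ]
  constructor <;> intro h <;> linarith

theorem one_lt_sqrt_one_add_div (hσ : 0 < σ) : 1 < √((1 + σ) / σ) := by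
  rw [lt_sqrt zero_le_one, lt_div_iff₀ hσ]
  linarith

theorem strictMonoOn_logDefect (hσ : 0 < σ) :
    StrictMonoOn (logDefect σ) (Icc 1 √((1 + σ) / σ)) := by
  refine strictMonoOn_of_deriv_pos (convex_Icc _ _)
    ((continuousOn_logDefect hσ.le).mono fun z hz => zero_lt_one.trans_le hz.1) fun z hz => ?_
  rw [interior_Icc] at hz
  have hz0 : 0 < z := zero_lt_one.trans hz.1
  have hsign : σ * (z ^ 2 - 1) < 1 := (mul_sq_sub_one_lt_one_iff hσ hz0.le).2 hz.2
  rw [(hasDerivAt_logDefect hσ.le hz0).deriv]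
  exact div_pos (mul_pos (mul_pos hσ (pow_pos (sub_pos.2 hz.1) 2)) (sub_pos.2 hsign))
    (by positivity)

theorem strictAntiOn_logDefect (hσ : 0 < σ) :
    StrictAntiOn (logDefect σ) (Ici √((1 + σ) / σ)) := by
  have hw := one_lt_sqrt_one_add_div hσ
  refine strictAntiOn_of_deriv_neg (convex_Ici _)
    ((continuousOn_logDefect hσ.le).mono fun z hz => zero_lt_one.trans (hw.trans_le hz))
    fun z hz => ?_
  rw [interior_Ici] at hz
  have hz1 : 1 < z := hw.trans hz
  have hz0 : 0 < z := zero_lt_one.trans hz1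
  have hsign : 1 < σ * (z ^ 2 - 1) := (one_lt_mul_sq_sub_one_iff hσ hz0).2 hz
  rw [(hasDerivAt_logDefect hσ.le hz0).deriv]
  exact div_neg_of_neg_of_pos
    (mul_neg_of_pos_of_neg (mul_pos hσ (pow_pos (sub_pos.2 hz1) 2)) (sub_neg.2 hsign))
    (by positivity)

theorem logDefect_one_add_sqrt_nonpos (hσ : 0 < σ) : logDefect σ (1 + √(8 / σ)) ≤ 0 := by
  have h8 : σ * (1 + √(8 / σ) - 1) ^ 2 = 8 := by
    rw [add_sub_cancel_left, sq_sqrt (by positivity)]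
    field_simp
  have hlog3 : log 3 ≤ 2 := by linarith [log_le_sub_one_of_pos (zero_lt_three' ℝ)]
  have hlog9 : log 9 = 2 * log 3 := by
    rw [show (9 : ℝ) = 3 ^ 2 by norm_num, log_pow, Nat.cast_ofNat]
  have := logDefect_le hσ.le (by positivity : 0 < 1 + √(8 / σ))
  rw [h8, show (8 : ℝ) + 1 = 9 by norm_num, hlog9] at this
  linarith

theorem sqrt_one_add_div_le_one_add_sqrt (hσ : 0 < σ) :
    √((1 + σ) / σ) ≤ 1 + √(8 / σ) := by
  rw [sqrt_le_iff]
  refine ⟨by positivity, ?_⟩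
  have h : 0 ≤ √(8 / σ) := sqrt_nonneg _
  have h18 : 1 / σ ≤ 8 / σ := by gcongr; norm_num
  rw [add_div, div_self hσ.ne', add_sq, sq_sqrt (by positivity)]
  linarith

end logDefect

theorem stmt_1 (σ : ℝ) (hσ : 0 < σ) :
    ∃ ζ : ℝ, Real.sqrt ((1 + σ) / σ) < ζ ∧ 1 < Real.sqrt ((1 + σ) / σ) ∧
      ζ ^ σ * (σ * (ζ - 1) ^ 2 + 1) = Real.exp (σ * (ζ ^ 2 - 1) / 2) ∧
      (∀ z : ℝ, 1 ≤ z →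
        z ^ σ * (σ * (z - 1) ^ 2 + 1) = Real.exp (σ * (z ^ 2 - 1) / 2) →
        z = 1 ∨ z = ζ) ∧
      (∀ z ∈ Set.Ioo (1 : ℝ) ζ,
        z ^ σ * (σ * (z - 1) ^ 2 + 1) > Real.exp (σ * (z ^ 2 - 1) / 2)) := by
  have hw := one_lt_sqrt_one_add_div hσ
  obtain ⟨ζ, hwζ, hζ, hzeros, hpos⟩ := exists_zero_of_strictMonoOn_of_strictAntiOn
    (strictMonoOn_logDefect hσ) (strictAntiOn_logDefect hσ)
    ((continuousOn_logDefect hσ.le).mono fun z hz => (zero_lt_one.trans hw).trans_le hz.1)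
    hw (sqrt_one_add_div_le_one_add_sqrt hσ) logDefect_one (logDefect_one_add_sqrt_nonpos hσ)
  refine ⟨ζ, hwζ, hw, (logDefect_eq_zero_iff hσ.le (by linarith)).2 hζ,
    fun z hz h => hzeros z hz ((logDefect_eq_zero_iff hσ.le (by linarith)).1 h),
    fun z hz => (logDefect_pos_iff hσ.le (by linarith [hz.1])).2 (hpos z hz)⟩
end

section
/- For σ ≥ 0, define g₀(n) = (1+σ)/n + σn + exp((1+σ)/2 − (1+σ)/(2n²) − σ ln n) and 𝔤₀(n) = n − exp((1+σ)/2 − (1+σ)/(2n²) − σ ln n). Then 𝔤₀(n) = 0 has unique solution n = 1 on (0,∞), 𝔤₀(n) > 0 for n ∈ (1,∞), and g₀'(n) = −((1+σ)/n³ − σ/n)·𝔤₀(n). -/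
open Real

noncomputable def exponent (σ n : ℝ) : ℝ :=
  (1 + σ) / 2 - (1 + σ) / (2 * n ^ 2) - σ * Real.log n

lemma exponent_one (σ : ℝ) : exponent σ 1 = 0 := by
  norm_num [exponent]

/- With `t = x⁻²` one has `exponent σ x - log x = (1 + σ) (log t - (t - 1)) / 2`, and
`log t < t - 1` for `t ≠ 1`. -/
lemma exponent_lt_log {σ x : ℝ} (hσ : -1 < σ) (hx : 0 < x) (hx1 : x ≠ 1) :
    exponent σ x < Real.log x := by
  have ht : 0 < (x ^ 2)⁻¹ := by positivity
  have ht1 : (x ^ 2)⁻¹ ≠ 1 := by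
    rwa [Ne, inv_eq_one, pow_eq_one_iff_of_nonneg hx.le two_ne_zero]
  have hlog := Real.log_lt_sub_one_of_pos ht ht1
  rw [Real.log_inv, Real.log_pow, Nat.cast_ofNat] at hlog
  have hdiff : exponent σ x - Real.log x
      = (1 + σ) / 2 * (-(2 * Real.log x) - ((x ^ 2)⁻¹ - 1)) := by
    unfold exponent
    field_simp
    ring
  nlinarith

lemma exp_exponent_lt {σ x : ℝ} (hσ : -1 < σ) (hx : 0 < x) (hx1 : x ≠ 1) :
    Real.exp (exponent σ x) < x :=
  (Real.exp_lt_exp.2 (exponent_lt_log hσ hx hx1)).trans_eq (Real.exp_log hx)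

lemma hasDerivAt_exponent (σ : ℝ) {x : ℝ} (hx : x ≠ 0) :
    HasDerivAt (exponent σ) ((1 + σ) / x ^ 3 - σ / x) x := by
  have hquot := (hasDerivAt_const x (1 + σ)).div ((hasDerivAt_pow 2 x).const_mul 2)
    (by positivity : 2 * x ^ 2 ≠ 0)
  have hlog := (Real.hasDerivAt_log hx).const_mul σ
  refine (((hasDerivAt_const x ((1 + σ) / 2)).sub hquot).sub hlog).congr_deriv ?_
  field_simp
  ring

/- The derivative `-(1+σ)/x² + σ` of the rational part equals `-x` times the derivative of the
exponent, which is what makes the derivative factor through `x - exp (exponent σ x)`. -/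
lemma hasDerivAt_div_add_mul_add_exp_exponent (σ : ℝ) {x : ℝ} (hx : x ≠ 0) :
    HasDerivAt (fun n => (1 + σ) / n + σ * n + Real.exp (exponent σ n))
      (-((1 + σ) / x ^ 3 - σ / x) * (x - Real.exp (exponent σ x))) x := by
  have hinv := (hasDerivAt_const x (1 + σ)).div (hasDerivAt_id' x) hx
  have hlin := (hasDerivAt_id' x).const_mul σ
  refine ((hinv.add hlin).add (hasDerivAt_exponent σ hx).exp).congr_deriv ?_
  field_simp
  ring

theorem stmt_13 (σ : ℝ) (hσ : 0 ≤ σ)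
    (g₀ 𝔤₀ : ℝ → ℝ)
    (hg₀ : ∀ n : ℝ, 0 < n →
      g₀ n = (1 + σ) / n + σ * n
        + Real.exp ((1 + σ) / 2 - (1 + σ) / (2 * n ^ 2) - σ * Real.log n))
    (h𝔤₀ : ∀ n : ℝ, 0 < n →
      𝔤₀ n = n - Real.exp ((1 + σ) / 2 - (1 + σ) / (2 * n ^ 2) - σ * Real.log n)) :
    (∀ n : ℝ, 0 < n → (𝔤₀ n = 0 ↔ n = 1)) ∧
    (∀ n : ℝ, 1 < n → 0 < 𝔤₀ n) ∧
    (∀ n : ℝ, 0 < n →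
      HasDerivAt g₀ (-((1 + σ) / n ^ 3 - σ / n) * 𝔤₀ n) n) := by
  have hσ' : -1 < σ := by linarith
  have h𝔤₀' : ∀ n, 0 < n → 𝔤₀ n = n - Real.exp (exponent σ n) := h𝔤₀
  refine ⟨fun n hn => ?_, fun n hn => ?_, fun n hn => ?_⟩
  · rw [h𝔤₀' n hn, sub_eq_zero]
    constructor
    · intro h
      by_contra hn1
      exact (exp_exponent_lt hσ' hn hn1).ne h.symm
    · rintro rfl
      simp [exponent_one]
  · rw [h𝔤₀' n (by linarith), sub_pos]
    exact exp_exponent_lt hσ' (by linarith) hn.ne'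
  · rw [h𝔤₀' n hn]
    refine (hasDerivAt_div_add_mul_add_exp_exponent σ hn.ne').congr_of_eventuallyEq ?_
    filter_upwards [eventually_gt_nhds hn] with y hy
    exact hg₀ y hy
end

section
/- For σ > 0, the function g₀(n) = (1+σ)/n + σn + exp((1+σ)/2 − (1+σ)/(2n²) − σ ln n) is strictly decreasing on (1, √((1+σ)/σ)); consequently g₀(n) < g₀(1) for all n ∈ (1, √((1+σ)/σ)). -/
/-!
The derivative factors as `g₀'(n) = (E(n)/n - 1) * ((1+σ)/n² - σ)`, with `E(n)` the exponential
term. The second factor is positive exactly for `n < √((1+σ)/σ)`, and `E(n) < n` for `n > 1`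
because `(1 - n⁻²)/2 < log n`, which is `log y < y - 1` at `y = n⁻²`.
-/

open Real Set

noncomputable def gZeroExponent (σ n : ℝ) : ℝ :=
  (1 + σ) / 2 - (1 + σ) / (2 * n ^ 2) - σ * log n

noncomputable def gZero (σ n : ℝ) : ℝ :=
  (1 + σ) / n + σ * n + exp (gZeroExponent σ n)

lemma one_sub_inv_sq_div_two_lt_log {x : ℝ} (hx : 1 < x) : (1 - (x ^ 2)⁻¹) / 2 < log x := by
  have hx0 : 0 < x := by linarith
  have hy : (x ^ 2)⁻¹ ≠ 1 := by
    rw [Ne, inv_eq_one]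
    nlinarith
  have := log_lt_sub_one_of_pos (by positivity) hy
  rw [log_inv, log_pow] at this
  push_cast at this
  linarith

lemma gZeroExponent_lt_log {σ x : ℝ} (hσ : -1 < σ) (hx : 1 < x) : gZeroExponent σ x < log x := by
  have hx0 : 0 < x := by linarith
  have key := mul_lt_mul_of_pos_left (one_sub_inv_sq_div_two_lt_log hx) (by linarith : 0 < 1 + σ)
  have hrw : (1 + σ) * ((1 - (x ^ 2)⁻¹) / 2) = (1 + σ) / 2 - (1 + σ) / (2 * x ^ 2) := by
    field_simp
  unfold gZeroExponent
  linarith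

lemma hasDerivAt_gZeroExponent (σ : ℝ) {x : ℝ} (hx : 0 < x) :
    HasDerivAt (gZeroExponent σ) ((1 + σ) / x ^ 3 - σ / x) x := by
  have hden : HasDerivAt (fun n : ℝ => 2 * n ^ 2) (2 * (2 * x)) x := by
    simpa using (hasDerivAt_pow 2 x).const_mul 2
  have h := ((hasDerivAt_const x ((1 + σ) / 2)).sub
    ((hasDerivAt_const x (1 + σ)).div hden (by positivity))).sub
    ((hasDerivAt_log hx.ne').const_mul σ)
  refine h.congr_deriv ?_
  field_simp
  ring

lemma hasDerivAt_gZero (σ : ℝ) {x : ℝ} (hx : 0 < x) :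
    HasDerivAt (gZero σ) ((exp (gZeroExponent σ x) / x - 1) * ((1 + σ) / x ^ 2 - σ)) x := by
  have h := (((hasDerivAt_const x (1 + σ)).div (hasDerivAt_id' x) hx.ne').add
    ((hasDerivAt_id' x).const_mul σ)).add (hasDerivAt_gZeroExponent σ hx).exp
  refine h.congr_deriv ?_
  field_simp
  ring

lemma deriv_gZero_neg {σ x : ℝ} (hσ : -1 < σ) (hx : 1 < x) (hxσ : σ * x ^ 2 < 1 + σ) :
    deriv (gZero σ) x < 0 := by
  have hx0 : 0 < x := by linarith
  rw [(hasDerivAt_gZero σ hx0).deriv]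
  have hexp : exp (gZeroExponent σ x) / x < 1 := by
    rw [div_lt_one hx0]
    simpa only [exp_log hx0] using exp_lt_exp.mpr (gZeroExponent_lt_log hσ hx)
  have hpos : 0 < (1 + σ) / x ^ 2 - σ := by
    rw [sub_pos, lt_div_iff₀ (by positivity)]
    linarith
  nlinarith

lemma gZero_strictAntiOn {σ : ℝ} (hσ : 0 < σ) :
    StrictAntiOn (gZero σ) (Icc 1 (√((1 + σ) / σ))) := by
  refine strictAntiOn_of_deriv_neg (convex_Icc _ _) ?_ ?_
  · intro x hx
    exact (hasDerivAt_gZero σ (by linarith [hx.1])).continuousAt.continuousWithinAt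
  · intro x hx
    rw [interior_Icc] at hx
    obtain ⟨hx1, hxR⟩ := hx
    have hsq : x ^ 2 < (1 + σ) / σ := (lt_sqrt (by linarith)).mp hxR
    exact deriv_gZero_neg (by linarith) hx1 (by rwa [lt_div_iff₀ hσ, mul_comm] at hsq)

theorem stmt_14 (σ : ℝ) (hσ : 0 < σ)
    (g₀ : ℝ → ℝ)
    (hg₀ : ∀ n : ℝ, 0 < n →
      g₀ n = (1 + σ) / n + σ * n
        + Real.exp ((1 + σ) / 2 - (1 + σ) / (2 * n ^ 2) - σ * Real.log n)) :
    StrictAntiOn g₀ (Set.Ioo 1 (Real.sqrt ((1 + σ) / σ))) ∧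
    ∀ n ∈ Set.Ioo (1 : ℝ) (Real.sqrt ((1 + σ) / σ)), g₀ n < g₀ 1 := by
  have hanti : StrictAntiOn g₀ (Icc 1 (√((1 + σ) / σ))) :=
    (gZero_strictAntiOn hσ).congr fun n hn => (hg₀ n (by linarith [hn.1])).symm
  refine ⟨hanti.mono Ioo_subset_Icc_self, fun n hn => ?_⟩
  exact hanti ⟨le_rfl, by linarith [hn.1, hn.2]⟩ (Ioo_subset_Icc_self hn) hn.1
end

section
/- Let σ ≥ 0, V = √(1+σ), γ > 0, and λ(ε) = √((2Vγ + γ²ε)/(1 + 2Vγε + γ²ε²)) for ε ≥ 0. There exists ε* > 0 such that λ is strictly decreasing on (0, ε*). -/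
open Real

theorem stmt_16 (σ γ : ℝ) (hσ : 0 ≤ σ) (hγ : 0 < γ)
    (V : ℝ) (hV : V = Real.sqrt (1 + σ))
    (lam : ℝ → ℝ)
    (hlam : ∀ ε : ℝ, 0 ≤ ε →
      lam ε = Real.sqrt ((2 * V * γ + γ ^ 2 * ε) / (1 + 2 * V * γ * ε + γ ^ 2 * ε ^ 2))) :
    ∃ εs : ℝ, 0 < εs ∧ StrictAntiOn lam (Set.Ioo 0 εs) := by
  have hV1 : 1 ≤ V := by
    have h1 : (0:ℝ) ≤ 1 + σ := by linarith
    nlinarith [Real.sq_sqrt h1, Real.sqrt_nonneg (1 + σ), hV]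
  refine ⟨1, one_pos, ?_⟩
  intro a ha b hb hab
  obtain ⟨ha0, ha1⟩ := ha
  obtain ⟨hb0, hb1⟩ := hb
  rw [hlam a ha0.le, hlam b hb0.le]
  have hV0 : (0:ℝ) < V := by linarith
  have hga : 0 < 1 + 2 * V * γ * a + γ ^ 2 * a ^ 2 := by positivity
  have hgb : 0 < 1 + 2 * V * γ * b + γ ^ 2 * b ^ 2 := by positivity
  apply Real.sqrt_lt_sqrt
  · positivity
  · rw [div_lt_div_iff₀ hgb hga]
    have hinner : 0 < 4 * V ^ 2 - 1 + 2 * V * γ * (a + b) + γ ^ 2 * (a * b) := by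
      nlinarith [mul_pos ha0 hb0, mul_pos (mul_pos hV0 hγ) (add_pos ha0 hb0)]
    have key : 0 < (b - a) * γ ^ 2 * (4 * V ^ 2 - 1 + 2 * V * γ * (a + b) + γ ^ 2 * (a * b)) :=
      mul_pos (mul_pos (sub_pos.mpr hab) (by positivity)) hinner
    nlinarith [key]
end

section
/- Let σ ≥ 0, V = √(1+σ), γ > 0, J(ε) = V + γε, and λ(ε) = √((2Vγ + γ²ε)/(1 + 2Vγε + γ²ε²)). Then the function ε ↦ (J(ε)² − σ)·λ(ε) is strictly increasing on (0,∞), and (J(ε)² − σ)·λ(ε) > √(2Vγ) for all ε > 0. -/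
open Real

theorem stmt_17 (σ γ : ℝ) (hσ : 0 ≤ σ) (hγ : 0 < γ)
    (V : ℝ) (hV : V = Real.sqrt (1 + σ))
    (J lam : ℝ → ℝ)
    (hJ : ∀ ε : ℝ, J ε = V + γ * ε)
    (hlam : ∀ ε : ℝ, 0 ≤ ε →
      lam ε = Real.sqrt ((2 * V * γ + γ ^ 2 * ε) / (1 + 2 * V * γ * ε + γ ^ 2 * ε ^ 2))) :
    StrictMonoOn (fun ε => ((J ε) ^ 2 - σ) * lam ε) (Set.Ioi 0) ∧
    ∀ ε : ℝ, 0 < ε → Real.sqrt (2 * V * γ) < ((J ε) ^ 2 - σ) * lam ε := by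
  have hVpos : 0 < V := by
    rw [hV]; exact Real.sqrt_pos.2 (by linarith)
  have hV2 : V ^ 2 = 1 + σ := by
    rw [hV, Real.sq_sqrt (by linarith)]
  have key : ∀ ε : ℝ, 0 < ε →
      ((J ε) ^ 2 - σ) * lam ε
        = Real.sqrt ((2 * V * γ + γ ^ 2 * ε) * (1 + 2 * V * γ * ε + γ ^ 2 * ε ^ 2)) := by
    intro ε hε
    have hN : 0 < 2 * V * γ + γ ^ 2 * ε := by positivity
    have hD : 0 < 1 + 2 * V * γ * ε + γ ^ 2 * ε ^ 2 := by positivity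
    have hJ2 : (J ε) ^ 2 - σ = 1 + 2 * V * γ * ε + γ ^ 2 * ε ^ 2 := by
      rw [hJ]; nlinarith [hV2]
    rw [hJ2, hlam ε hε.le, Real.sqrt_div hN.le,
      mul_div_assoc' _ _ (Real.sqrt _), mul_comm, mul_div_assoc, Real.div_sqrt,
      ← Real.sqrt_mul hN.le]
  constructor
  · intro a ha b hb hab
    simp only [Set.mem_Ioi] at ha hb
    simp only [key a ha, key b hb]
    apply Real.sqrt_lt_sqrt (by positivity)
    have h1 : 2 * V * γ + γ ^ 2 * a < 2 * V * γ + γ ^ 2 * b := by nlinarith [mul_lt_mul_of_pos_left hab (pow_pos hγ 2)]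
    have h2 : 1 + 2 * V * γ * a + γ ^ 2 * a ^ 2 < 1 + 2 * V * γ * b + γ ^ 2 * b ^ 2 := by
      have : a ^ 2 < b ^ 2 := by nlinarith
      nlinarith [mul_pos (mul_pos hVpos hγ) (sub_pos.2 hab)]
    exact mul_lt_mul'' h1 h2 (by positivity) (by positivity)
  · intro ε hε
    rw [key ε hε]
    apply Real.sqrt_lt_sqrt (by positivity)
    have h1 : 2 * V * γ ≤ 2 * V * γ + γ ^ 2 * ε := by nlinarith
    have h2 : (1:ℝ) < 1 + 2 * V * γ * ε + γ ^ 2 * ε ^ 2 := by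
      nlinarith [mul_pos (mul_pos (mul_pos two_pos hVpos) hγ) hε]
    calc 2 * V * γ = 2 * V * γ * 1 := (mul_one _).symm
      _ < _ := mul_lt_mul' h1 h2 zero_le_one (by positivity)
end

section
/- Let α > 0 and let f : [0,∞) → ℝ be continuously differentiable with f·e^{αξ/2} and f'·e^{αξ/2} in L²([0,∞)) and f(ξ)e^{αξ} → 0 as ξ → ∞. Then sup_{ξ ≥ 0} |f(ξ)|²e^{αξ} ≤ 2‖f e^{αξ/2}‖_{L²} · (‖f' e^{αξ/2}‖_{L²} + (α/2)‖f e^{αξ/2}‖_{L²}). -/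
/-!
Put `g(t) = f(t)² e^{αt}`, so that `g' = (2 f f' + α f²) e^{αt}`. Since `g → 0` at infinity,
`g(ξ) = -∫_ξ^∞ g' ≤ ∫_0^∞ (2 |f| |f'| + α f²) e^{αt}`, and the Cauchy–Schwarz inequality in
`L²(e^{αt} dt)` bounds `∫_0^∞ |f| |f'| e^{αt}` by the product of the two weighted `L²` norms.
-/

open Real MeasureTheory Filter Set Topology

section WeightedCauchySchwarz

variable {X : Type*} [MeasurableSpace X] {μ : Measure X} {u v w : X → ℝ}

lemma memLp_two_abs_mul_sqrt (hu : AEStronglyMeasurable u μ) (hw : AEStronglyMeasurable w μ)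
    (hw0 : ∀ x, 0 ≤ w x) (h : Integrable (fun x => u x ^ 2 * w x) μ) :
    MemLp (fun x => |u x| * √(w x)) 2 μ := by
  refine (memLp_two_iff_integrable_sq
    (hu.norm.mul hw.aemeasurable.sqrt.aestronglyMeasurable)).2 (h.congr (.of_forall fun x => ?_))
  simp only [Pi.mul_apply, norm_eq_abs, mul_pow, sq_abs, sq_sqrt (hw0 x)]

lemma integrable_abs_mul_abs_mul (hu : AEStronglyMeasurable u μ) (hv : AEStronglyMeasurable v μ)
    (hw : AEStronglyMeasurable w μ) (hw0 : ∀ x, 0 ≤ w x)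
    (hu2 : Integrable (fun x => u x ^ 2 * w x) μ) (hv2 : Integrable (fun x => v x ^ 2 * w x) μ) :
    Integrable (fun x => |u x| * |v x| * w x) μ := by
  refine ((memLp_two_abs_mul_sqrt hu hw hw0 hu2).integrable_mul
    (memLp_two_abs_mul_sqrt hv hw hw0 hv2)).congr (.of_forall fun x => ?_)
  simp only [Pi.mul_apply]
  linear_combination |u x| * |v x| * mul_self_sqrt (hw0 x)

lemma integral_abs_mul_abs_mul_le (hu : AEStronglyMeasurable u μ) (hv : AEStronglyMeasurable v μ)
    (hw : AEStronglyMeasurable w μ) (hw0 : ∀ x, 0 ≤ w x)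
    (hu2 : Integrable (fun x => u x ^ 2 * w x) μ) (hv2 : Integrable (fun x => v x ^ 2 * w x) μ) :
    ∫ x, |u x| * |v x| * w x ∂μ ≤ √(∫ x, u x ^ 2 * w x ∂μ) * √(∫ x, v x ^ 2 * w x ∂μ) := by
  have h := integral_mul_le_Lp_mul_Lq_of_nonneg HolderConjugate.two_two
    (.of_forall fun x => by positivity) (.of_forall fun x => by positivity)
    (ENNReal.ofReal_ofNat 2 ▸ memLp_two_abs_mul_sqrt hu hw hw0 hu2)
    (ENNReal.ofReal_ofNat 2 ▸ memLp_two_abs_mul_sqrt hv hw hw0 hv2)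
  have hsq (φ : X → ℝ) (x : X) : (|φ x| * √(w x)) ^ (2 : ℝ) = φ x ^ 2 * w x := by
    rw [rpow_two, mul_pow, sq_abs, sq_sqrt (hw0 x)]
  calc ∫ x, |u x| * |v x| * w x ∂μ = ∫ x, |u x| * √(w x) * (|v x| * √(w x)) ∂μ :=
        integral_congr_ae (.of_forall fun x => by
          linear_combination |u x| * |v x| * (mul_self_sqrt (hw0 x)).symm)
    _ ≤ _ := h
    _ = _ := by simp only [hsq]; simp only [sqrt_eq_rpow, one_div]

end WeightedCauchySchwarz

lemma le_integral_Ioi_abs_of_hasDerivAt_of_tendsto_zero {g g' : ℝ → ℝ} {a : ℝ}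
    (hderiv : ∀ x ∈ Ici a, HasDerivAt g (g' x) x) (hint : IntegrableOn g' (Ioi a))
    (hlim : Tendsto g atTop (𝓝 0)) : g a ≤ ∫ x in Ioi a, |g' x| :=
  calc g a = -∫ x in Ioi a, g' x := by
        rw [integral_Ioi_of_hasDerivAt_of_tendsto' hderiv hint hlim]; ring
    _ ≤ ∫ x in Ioi a, |g' x| := (neg_le_abs _).trans abs_integral_le_integral_abs

lemma hasDerivAt_sq_mul_exp {f : ℝ → ℝ} {f' α x : ℝ} (hf : HasDerivAt f f' x) :
    HasDerivAt (fun t => f t ^ 2 * exp (α * t)) ((2 * f x * f' + α * f x ^ 2) * exp (α * x)) x :=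
  ((hf.fun_pow 2).fun_mul (hasDerivAt_const_mul α).exp).congr_deriv (by push_cast; ring)

lemma tendsto_sq_mul_exp_of_tendsto_mul_exp {f : ℝ → ℝ} {α : ℝ} (hα : 0 < α)
    (h : Tendsto (fun t => f t * exp (α * t)) atTop (𝓝 0)) :
    Tendsto (fun t => f t ^ 2 * exp (α * t)) atTop (𝓝 0) := by
  have hexp := tendsto_exp_neg_atTop_nhds_zero.comp (tendsto_id.const_mul_atTop hα)
  convert (h.pow 2).mul hexp using 1
  · ext t
    simp only [Function.comp_apply, id, exp_neg]
    field_simp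
  · simp

lemma sq_mul_exp_le_integral {f f' : ℝ → ℝ} {α ξ : ℝ} (hα : 0 < α)
    (hf : ∀ x, HasDerivAt f (f' x) x) (hf' : Continuous f')
    (hfL2 : IntegrableOn (fun t => f t ^ 2 * exp (α * t)) (Ici 0))
    (hcross : IntegrableOn (fun t => |f t| * |f' t| * exp (α * t)) (Ici 0))
    (hdecay : Tendsto (fun t => f t * exp (α * t)) atTop (𝓝 0)) (hξ : 0 ≤ ξ) :
    f ξ ^ 2 * exp (α * ξ) ≤ 2 * (∫ t in Ici 0, |f t| * |f' t| * exp (α * t)) +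
      α * ∫ t in Ici 0, f t ^ 2 * exp (α * t) := by
  have hf_cont : Continuous f := continuous_iff_continuousAt.2 fun x => (hf x).continuousAt
  set H := fun t => 2 * (|f t| * |f' t| * exp (α * t)) + α * (f t ^ 2 * exp (α * t))
  have hH : IntegrableOn H (Ici 0) := (hcross.const_mul 2).add (hfL2.const_mul α)
  set g' := fun t => (2 * f t * f' t + α * f t ^ 2) * exp (α * t)
  have hg'_le (t : ℝ) : |g' t| ≤ H t := by
    have h := abs_add_le (2 * f t * f' t) (α * f t ^ 2)
    rw [abs_mul, abs_mul, abs_mul, abs_two, abs_of_pos hα, abs_sq] at h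
    simp only [g', H, abs_mul, abs_exp]
    nlinarith [exp_pos (α * t)]
  have hsub : Ioi ξ ⊆ Ici 0 := Ioi_subset_Ici hξ
  have hg'_int : IntegrableOn g' (Ioi ξ) :=
    (hH.mono_set hsub).mono' (by fun_prop) (.of_forall hg'_le)
  calc f ξ ^ 2 * exp (α * ξ) ≤ ∫ t in Ioi ξ, |g' t| :=
        le_integral_Ioi_abs_of_hasDerivAt_of_tendsto_zero
          (fun x _ => hasDerivAt_sq_mul_exp (hf x)) hg'_int
          (tendsto_sq_mul_exp_of_tendsto_mul_exp hα hdecay)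
    _ ≤ ∫ t in Ioi ξ, H t := setIntegral_mono hg'_int.abs (hH.mono_set hsub) hg'_le
    _ ≤ ∫ t in Ici 0, H t :=
        setIntegral_mono_set hH (.of_forall fun t => by positivity) (.of_forall hsub)
    _ = _ := by
        rw [integral_add (hcross.const_mul 2) (hfL2.const_mul α), integral_const_mul,
          integral_const_mul]

theorem stmt_19 (α : ℝ) (hα : 0 < α)
    (f : ℝ → ℝ) (hf : ContDiff ℝ 1 f)
    (hfL2 : IntegrableOn (fun ξ => (f ξ) ^ 2 * Real.exp (α * ξ)) (Set.Ici 0))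
    (hf'L2 : IntegrableOn (fun ξ => (deriv f ξ) ^ 2 * Real.exp (α * ξ)) (Set.Ici 0))
    (hdecay : Tendsto (fun ξ => f ξ * Real.exp (α * ξ)) atTop (nhds 0)) :
    ∀ ξ : ℝ, 0 ≤ ξ →
      (f ξ) ^ 2 * Real.exp (α * ξ) ≤
        2 * Real.sqrt (∫ t in Set.Ici (0 : ℝ), (f t) ^ 2 * Real.exp (α * t)) *
          (Real.sqrt (∫ t in Set.Ici (0 : ℝ), (deriv f t) ^ 2 * Real.exp (α * t)) +
            α / 2 * Real.sqrt (∫ t in Set.Ici (0 : ℝ), (f t) ^ 2 * Real.exp (α * t))) := by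
  intro ξ hξ
  have hf_meas := hf.continuous.aestronglyMeasurable (μ := volume.restrict (Ici 0))
  have hf'_meas := (hf.continuous_deriv le_rfl).aestronglyMeasurable (μ := volume.restrict (Ici 0))
  have hw_meas := (continuous_const_mul α).rexp.aestronglyMeasurable (μ := volume.restrict (Ici 0))
  have hw0 (t : ℝ) : 0 ≤ exp (α * t) := (exp_pos _).le
  have hA : 0 ≤ ∫ t in Ici 0, f t ^ 2 * exp (α * t) :=
    setIntegral_nonneg measurableSet_Ici fun t _ => by positivity
  calc f ξ ^ 2 * exp (α * ξ)
      ≤ 2 * (∫ t in Ici 0, |f t| * |deriv f t| * exp (α * t)) +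
          α * ∫ t in Ici 0, f t ^ 2 * exp (α * t) :=
        sq_mul_exp_le_integral hα (fun x => (hf.differentiable one_ne_zero x).hasDerivAt)
          (hf.continuous_deriv le_rfl) hfL2
          (integrable_abs_mul_abs_mul hf_meas hf'_meas hw_meas hw0 hfL2 hf'L2) hdecay hξ
    _ ≤ 2 * (√(∫ t in Ici 0, f t ^ 2 * exp (α * t)) * √(∫ t in Ici 0, deriv f t ^ 2 * exp (α * t)))
          + α * ∫ t in Ici 0, f t ^ 2 * exp (α * t) := by
        gcongr
        exact integral_abs_mul_abs_mul_le hf_meas hf'_meas hw_meas hw0 hfL2 hf'L2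
    _ = _ := by linear_combination (-α) * mul_self_sqrt hA
end
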